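/- arXiv:1212.6201 — 4 statements merged into one kernel-verified Lean document; each statement's English description precedes it below -/
import Mathlib

section
/- Let n : P(Ω) → F be an elementary numerosity and let β > 0 be an element of F. Define ν : P(Ω) → [0,+∞] by ν(A) = sh(n(A)/β). Then ν is a finitely additive measure defined on all subsets of Ω: ν(∅) = 0 and ν(A ∪ B) = ν(A) + ν(B) for all disjoint A, B ⊆ Ω (with the convention x + ∞ = ∞). Moreover, ν({x}) = 0 for every point x ∈ Ω if and only if β is an infinite element of F. -/
open scoped ENNReal

/-- ξ is infinitesimal w.r.t. the embedding ι : ℝ → F. -/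
def Infinitesimal {F : Type*} [Field F] [LinearOrder F] [IsStrictOrderedRing F] (ι : ℝ →+*o F) (ξ : F) : Prop :=
  ∀ k : ℕ, 0 < k → -ι (1 / k) < ξ ∧ ξ < ι (1 / k)

/-- ξ is a finite element of F w.r.t. the embedding ι : ℝ → F. -/
def IsFiniteElem {F : Type*} [Field F] [LinearOrder F] [IsStrictOrderedRing F] (ι : ℝ →+*o F) (ξ : F) : Prop :=
  ∃ k : ℤ, -ι k < ξ ∧ ξ < ι k

-- The shadow (standard part) of ξ, valued in [0,+∞]: the unique real r with
-- ξ - ι r infinitesimal if it exists (converted via `ENNReal.ofReal`), and +∞ otherwise.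
open scoped Classical in
noncomputable def sh {F : Type*} [Field F] [LinearOrder F] [IsStrictOrderedRing F] (ι : ℝ →+*o F) (ξ : F) : ℝ≥0∞ :=
  if h : ∃ r : ℝ, Infinitesimal ι (ξ - ι r) then ENNReal.ofReal h.choose else ⊤

/-!
Infinitesimal and finite elements of `F` are exactly those of positive, resp. nonnegative,
Archimedean class, and the shadow of a finite element is its standard part
`ArchimedeanClass.stdPart`. The sum of two nonnegative elements is finite iff both summands are,
so additivity of `sh` on nonnegative elements reduces to additivity of `stdPart`. Every singleton
has numerosity `1`, so `ν {x} = sh β⁻¹`, which vanishes iff `β⁻¹` is infinitesimal, i.e. iff `β`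
is infinite.
-/

open ArchimedeanClass

theorem ArchimedeanClass.mk_add_of_nonneg {M : Type*} [AddCommGroup M] [LinearOrder M]
    [IsOrderedAddMonoid M] {x y : M} (hx : 0 ≤ x) (hy : 0 ≤ y) :
    mk (x + y) = min (mk x) (mk y) :=
  le_antisymm
    (le_min (mk_antitoneOn hx (add_nonneg hx hy) (le_add_of_nonneg_right hy))
      (mk_antitoneOn hy (add_nonneg hx hy) (le_add_of_nonneg_left hx)))
    (min_le_mk_add x y)

section Superreal

variable {F : Type*} [Field F] [LinearOrder F] [IsStrictOrderedRing F] {ι : ℝ →+*o F} {ξ : F}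

theorem infinitesimal_iff_mk_pos : Infinitesimal ι ξ ↔ 0 < mk ξ := by
  rw [← mk_one, mk_lt_mk, abs_one]
  have hι (k : ℕ) : ι (1 / k) = (k : F)⁻¹ := by simp
  refine ⟨fun h k => ?_, fun h k hk => ?_⟩
  · rcases k.eq_zero_or_pos with rfl | hk
    · simp
    · have hk' : (0 : F) < k := by exact_mod_cast hk
      calc k • |ξ| = k * |ξ| := nsmul_eq_mul ..
        _ < k * (k : F)⁻¹ := by gcongr; rw [← hι]; exact abs_lt.mpr (h k hk)
        _ = 1 := mul_inv_cancel₀ hk'.ne'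
  · have hk' : (0 : F) < k := by exact_mod_cast hk
    rw [hι, ← abs_lt, ← mul_lt_mul_iff_right₀ hk', mul_inv_cancel₀ hk'.ne', ← nsmul_eq_mul]
    exact h k

theorem isFiniteElem_iff_mk_nonneg : IsFiniteElem ι ξ ↔ 0 ≤ mk ξ := by
  refine ⟨fun ⟨k, hlo, hhi⟩ => ?_, fun h => ?_⟩
  · exact mk_nonneg_of_le_of_le_of_archimedean ι (r := -k) (s := k) (by simpa using hlo.le) hhi.le
  · obtain ⟨k, hk⟩ := exists_int_gt_of_mk_nonneg (x := |ξ|) (by rwa [mk_abs])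
    exact ⟨k, by simpa [abs_lt] using hk⟩

theorem exists_infinitesimal_sub_iff_mk_nonneg :
    (∃ r, Infinitesimal ι (ξ - ι r)) ↔ 0 ≤ mk ξ := by
  simp_rw [infinitesimal_iff_mk_pos]
  refine ⟨fun ⟨r, hr⟩ => ?_, fun h => ⟨stdPart ξ, mk_sub_stdPart_pos ι h⟩⟩
  calc 0 ≤ min (mk (ξ - ι r)) (mk (ι r)) := le_min hr.le (mk_map_nonneg_of_archimedean ι r)
    _ ≤ mk (ξ - ι r + ι r) := min_le_mk_add ..
    _ = mk ξ := by rw [sub_add_cancel]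

theorem sh_of_mk_nonneg (h : 0 ≤ mk ξ) : sh ι ξ = ENNReal.ofReal (stdPart ξ) := by
  have hex := (exists_infinitesimal_sub_iff_mk_nonneg (ι := ι)).2 h
  rw [sh, dif_pos hex, (mk_sub_pos_iff ι h).1 (infinitesimal_iff_mk_pos.1 hex.choose_spec)]

theorem sh_of_mk_neg (h : mk ξ < 0) : sh ι ξ = ⊤ := by
  rw [sh, dif_neg (exists_infinitesimal_sub_iff_mk_nonneg.not.2 h.not_ge)]

theorem sh_add {x y : F} (hx : 0 ≤ x) (hy : 0 ≤ y) : sh ι (x + y) = sh ι x + sh ι y := by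
  rcases lt_or_ge (min (mk x) (mk y)) 0 with hinf | hfin
  · rw [sh_of_mk_neg ((mk_add_of_nonneg hx hy).trans_lt hinf)]
    rcases min_lt_iff.1 hinf with h | h <;> simp [sh_of_mk_neg h]
  · obtain ⟨hfx, hfy⟩ := le_min_iff.1 hfin
    rw [sh_of_mk_nonneg hfx, sh_of_mk_nonneg hfy,
      sh_of_mk_nonneg (hfin.trans_eq (mk_add_of_nonneg hx hy).symm), stdPart_add hfx hfy,
      ENNReal.ofReal_add (stdPart_nonneg hx) (stdPart_nonneg hy)]

theorem sh_eq_zero_iff (hξ : 0 ≤ ξ) : sh ι ξ = 0 ↔ 0 < mk ξ := by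
  rcases lt_or_ge (mk ξ) 0 with h | h
  · simp [sh_of_mk_neg h, h.le.not_gt]
  · rw [sh_of_mk_nonneg h, ENNReal.ofReal_eq_zero, LE.le.ge_iff_eq' (stdPart_nonneg hξ),
      stdPart_eq_zero, h.lt_iff_ne, ne_comm]

end Superreal

/-- Given an elementary numerosity n and a positive β in F, the function
ν(A) = sh(n(A)/β) is a finitely additive measure on all subsets of Ω;
it vanishes on all singletons iff β is an infinite element of F. -/
theorem stmt1 {Ω : Type*} [Nonempty Ω] {F : Type*} [Field F] [LinearOrder F] [IsStrictOrderedRing F] (ι : ℝ →+*o F)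
    (n : Set Ω → F)
    (hnonneg : ∀ X : Set Ω, 0 ≤ n X)
    (hsingle : ∀ x : Ω, n {x} = 1)
    (hadd : ∀ A B : Set Ω, Disjoint A B → n (A ∪ B) = n A + n B)
    (β : F) (hβ : 0 < β) :
    sh ι (n ∅ / β) = 0 ∧
    (∀ A B : Set Ω, Disjoint A B →
      sh ι (n (A ∪ B) / β) = sh ι (n A / β) + sh ι (n B / β)) ∧
    ((∀ x : Ω, sh ι (n {x} / β) = 0) ↔ ¬ IsFiniteElem ι β) := by
  have hempty : n ∅ = 0 := by simpa using hadd ∅ ∅ disjoint_bot_left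
  have hpoint (x : Ω) : n {x} / β = β⁻¹ := by rw [hsingle, one_div]
  refine ⟨?_, fun A B hAB => ?_, ?_⟩
  · rw [hempty, zero_div, sh_eq_zero_iff le_rfl, mk_zero]
    exact zero_ne_top.lt_top
  · rw [hadd A B hAB, add_div]
    exact sh_add (div_nonneg (hnonneg A) hβ.le) (div_nonneg (hnonneg B) hβ.le)
  · simp only [hpoint, sh_eq_zero_iff (inv_nonneg.2 hβ.le), mk_inv,
      LinearOrderedAddCommGroupWithTop.neg_pos, mk_eq_top_iff, hβ.ne', or_false, forall_const,
      isFiniteElem_iff_mk_nonneg, not_le]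
end

section
/- Let (Ω, A, μ) be a non-atomic finitely additive measure, let B ⊆ A be a subring of sets such that every nonempty B ∈ B satisfies 0 < μ(B) < +∞, let m be a positive integer, let x₁, …, x_k ∈ Ω be finitely many points, and let A₁, …, A_n ∈ A be finitely many nonempty sets with μ(A_i) < +∞ for each i. Then there exists a finite subset λ ⊆ Ω such that: (1) x₁, …, x_k ∈ λ; (2) whenever A_i, A_j ∈ B and μ(A_i) = μ(A_j), the cardinalities satisfy |λ ∩ A_i| = |λ ∩ A_j|; and (3) whenever μ(A_j) ≠ 0, one has |λ ∩ A_j| > 0 and, for every i, | |λ ∩ A_i| / |λ ∩ A_j| − μ(A_i)/μ(A_j) | < 1/m. -/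
open scoped ENNReal

/-- A ring of sets over Ω: a nonempty family closed under finite unions,
finite intersections and relative complements. -/
structure IsRingOfSets {Ω : Type*} (𝒜 : Set (Set Ω)) : Prop where
  nonempty : 𝒜.Nonempty
  union_mem : ∀ A ∈ 𝒜, ∀ B ∈ 𝒜, A ∪ B ∈ 𝒜
  inter_mem : ∀ A ∈ 𝒜, ∀ B ∈ 𝒜, A ∩ B ∈ 𝒜
  diff_mem : ∀ A ∈ 𝒜, ∀ B ∈ 𝒜, A \ B ∈ 𝒜

/-
Split Ω into the atoms of the Venn diagram of A₁, …, Aₙ. Simultaneous Dirichlet approximation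
gives arbitrarily large q and integers p_T with |q μ(T) − p_T| small for all atoms T at once;
then Σ_{T ∋ i} p_T is the integer nearest to q μ(A_i), so it depends only on μ(A_i). Atoms of
positive measure are infinite by non-atomicity, so λ can take exactly p_T of their points,
besides the prescribed ones. The prescribed points lying in null atoms are surplus; for the
sets of ℬ it is compensated inside the atom of the Venn diagram of the ℬ-sets containing them:
that atom is a nonempty element of ℬ, hence of positive measure, hence contains an atom of
positive measure. All counts are then q μ(A_i) + O(1), which gives the ratio estimate as q → ∞.
-/

open Finset Filter MeasureTheory

theorem IsRingOfSets.isSetRing {Ω : Type*} {𝒜 : Set (Set Ω)} (h : IsRingOfSets 𝒜) :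
    IsSetRing 𝒜 where
  empty_mem := by
    obtain ⟨B, hB⟩ := h.nonempty
    simpa using h.diff_mem B hB B hB
  union_mem _ _ hs ht := h.union_mem _ hs _ ht
  sdiff_mem _ _ hs ht := h.diff_mem _ hs _ ht

theorem exists_superset_card_filter_eq {Ω κ : Type*} [Fintype κ] [DecidableEq κ] (g : Ω → κ)
    (X : Finset Ω) (n : κ → ℕ) (hle : ∀ c, #{x ∈ X | g x = c} ≤ n c)
    (hinf : ∀ c, #{x ∈ X | g x = c} < n c → (g ⁻¹' {c}).Infinite) :
    ∃ L : Finset Ω, X ⊆ L ∧ ∀ c, #{x ∈ L | g x = c} = n c := by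
  classical
  have hfiber : ∀ c, ∃ S : Finset Ω, {x ∈ X | g x = c} ⊆ S ∧ (∀ x ∈ S, g x = c) ∧ #S = n c := by
    intro c
    rcases (hle c).lt_or_eq with hlt | heq
    · obtain ⟨S, hXS, hSg, hcard⟩ := (hinf c hlt).exists_superset_ncard_eq
        (s := ↑{x ∈ X | g x = c}) (k := n c) (by simp [Set.subset_def]) (finite_toSet _)
        (by rw [Set.ncard_coe_finset]; exact hlt.le)
      have hSfin : S.Finite := Set.finite_of_ncard_pos (by omega)
      refine ⟨hSfin.toFinset, by simpa using hXS, fun x hx => hSg (hSfin.mem_toFinset.1 hx), ?_⟩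
      rw [← hcard, Set.ncard_eq_toFinset_card S hSfin]
    · exact ⟨_, subset_rfl, fun x hx => (mem_filter.1 hx).2, heq⟩
  choose S hXS hSg hcard using hfiber
  refine ⟨univ.biUnion S, fun x hx => mem_biUnion.2 ⟨g x, mem_univ _, hXS _ (by simp [hx])⟩,
    fun c => ?_⟩
  rw [← hcard c]
  congr 1
  ext x
  simp only [mem_filter, mem_biUnion, mem_univ, true_and]
  constructor
  · rintro ⟨⟨c', hx⟩, rfl⟩
    rwa [hSg c' x hx]
  · intro hx
    exact ⟨⟨c, hx⟩, hSg c x hx⟩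

section Pattern

variable {Ω ι : Type*} [Fintype ι] (A : ι → Set Ω)

-- the fibres `pattern A ⁻¹' {T}` are the atoms of the Venn diagram of `A`
open scoped Classical in
noncomputable def pattern (ω : Ω) : Finset ι := {i | ω ∈ A i}

variable {A}

@[simp]
theorem mem_pattern {ω : Ω} {i : ι} : i ∈ pattern A ω ↔ ω ∈ A i := by
  simp [pattern]

variable [DecidableEq ι]

theorem setOf_pattern_inter_eq_mem {C : Set (Set Ω)} (hC : IsSetRing C) {J σ : Finset ι}
    (hA : ∀ i ∈ J, A i ∈ C) (hσ : σ.Nonempty) (hσJ : σ ⊆ J) :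
    {ω | pattern A ω ∩ J = σ} ∈ C := by
  have : {ω | pattern A ω ∩ J = σ} = (⋂ i ∈ σ, A i) \ ⋃ i ∈ J \ σ, A i := by
    ext ω
    simp only [Set.mem_ofPred_eq, Finset.ext_iff, mem_inter, mem_pattern, Set.mem_sdiff,
      Set.mem_iInter, Set.mem_iUnion, not_exists]
    grind
  rw [this]
  exact hC.sdiff_mem (hC.biInter_mem σ hσ fun i hi => hA i (hσJ hi))
    (hC.biUnion_mem _ fun i hi => hA i (mem_sdiff.1 hi).1)

theorem preimage_pattern_mem {C : Set (Set Ω)} (hC : IsSetRing C) (hA : ∀ i, A i ∈ C)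
    {T : Finset ι} (hT : T.Nonempty) : pattern A ⁻¹' {T} ∈ C := by
  simpa [Set.preimage, Set.mem_singleton_iff] using
    setOf_pattern_inter_eq_mem hC (fun i _ => hA i) hT (subset_univ T)

theorem addContent_preimage_pattern {C : Set (Set Ω)} (hC : IsSetRing C) (hA : ∀ i, A i ∈ C)
    {G : Type*} [AddCommMonoid G] (m : AddContent G C) {s : Finset (Finset ι)} (hs : ∅ ∉ s) :
    m (pattern A ⁻¹' s) = ∑ T ∈ s, m (pattern A ⁻¹' {T}) := by
  rw [← Set.biUnion_preimage_singleton]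
  exact addContent_biUnion_eq hC
    (fun T hT => preimage_pattern_mem hC hA (nonempty_iff_ne_empty.2 fun h => hs (h ▸ hT)))
    (Set.pairwiseDisjoint_fiber _ _)

theorem ncard_inter_eq_sum_card_pattern (L : Finset Ω) (i : ι) :
    (↑L ∩ A i).ncard = ∑ T with i ∈ T, #{x ∈ L | pattern A x = T} := by
  classical
  calc (↑L ∩ A i).ncard = #{x ∈ L | x ∈ A i} := by
        rw [← Set.ncard_coe_finset]; congr 1; ext; simp
    _ = ∑ T with i ∈ T, #{x ∈ {x ∈ L | x ∈ A i} | pattern A x = T} :=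
        card_eq_sum_card_fiberwise fun x hx => by simpa using (mem_filter.1 hx).2
    _ = ∑ T with i ∈ T, #{x ∈ L | pattern A x = T} := by
        refine sum_congr rfl fun T hT => ?_
        rw [filter_filter]
        congr 1
        refine filter_congr fun x _ => ⟨And.right, fun hx => ⟨?_, hx⟩⟩
        simpa [← mem_pattern, hx] using (mem_filter.1 hT).2

theorem addContent_eq_sum_pattern {C : Set (Set Ω)} (hC : IsSetRing C) (hA : ∀ i, A i ∈ C)
    {G : Type*} [AddCommMonoid G] (m : AddContent G C) (i : ι) :
    m (A i) = ∑ T with i ∈ T, m (pattern A ⁻¹' {T}) := by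
  have hAi : pattern A ⁻¹' ↑({T | i ∈ T} : Finset (Finset ι)) = A i := by
    ext
    simp
  rw [← addContent_preimage_pattern hC hA m (by simp), hAi]

theorem exists_addContent_ne_zero_of_inter_eq {𝒜 ℬ : Set (Set Ω)} (h𝒜 : IsSetRing 𝒜)
    (hℬ : IsSetRing ℬ) {G : Type*} [AddCommMonoid G] (m : AddContent G 𝒜)
    (hℬpos : ∀ B ∈ ℬ, B.Nonempty → m B ≠ 0) (hA : ∀ i, A i ∈ 𝒜) {J : Finset ι}
    (hJ : ∀ i ∈ J, A i ∈ ℬ) {T : Finset ι} (hT : (pattern A ⁻¹' {T}).Nonempty)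
    (hTJ : (T ∩ J).Nonempty) :
    ∃ T', T'.Nonempty ∧ m (pattern A ⁻¹' {T'}) ≠ 0 ∧ T' ∩ J = T ∩ J := by
  have hclass : {ω | pattern A ω ∩ J = T ∩ J} =
      pattern A ⁻¹' ↑({T' | T' ∩ J = T ∩ J} : Finset _) := by
    ext
    simp
  have hne := hℬpos _ (setOf_pattern_inter_eq_mem hℬ hJ hTJ inter_subset_right)
    (hT.mono fun ω hω => by simp_all)
  rw [hclass, addContent_preimage_pattern h𝒜 hA m (by simpa [eq_comm] using hTJ.ne_empty)] at hne
  obtain ⟨T', hT', hT'ne⟩ := exists_ne_zero_of_sum_ne_zero hne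
  have hT'J : T' ∩ J = T ∩ J := (mem_filter.1 hT').2
  exact ⟨T', (hT'J ▸ hTJ).mono inter_subset_left, hT'ne, hT'J⟩

theorem exists_superset_ncard_inter_eq_sum (X : Finset Ω) (n : Finset ι → ℕ)
    (hle : ∀ T, #{x ∈ X | pattern A x = T} ≤ n T)
    (hinf : ∀ T, #{x ∈ X | pattern A x = T} < n T → (pattern A ⁻¹' {T}).Infinite) :
    ∃ L : Finset Ω, X ⊆ L ∧ ∀ i, (↑L ∩ A i).ncard = ∑ T with i ∈ T, n T := by
  obtain ⟨L, hXL, hL⟩ := exists_superset_card_filter_eq (pattern A) X n hle hinf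
  exact ⟨L, hXL, fun i =>
    (ncard_inter_eq_sum_card_pattern L i).trans (sum_congr rfl fun T _ => hL T)⟩

end Pattern

theorem sum_filter_mem_eq_zero {ι M : Type*} [Fintype ι] [DecidableEq ι] [AddCommMonoid M]
    {J : Finset ι} {d : Finset ι → M}
    (hd : ∀ σ : Finset ι, σ.Nonempty → ∑ T with T ∩ J = σ, d T = 0)
    {i : ι} (hi : i ∈ J) : ∑ T with i ∈ T, d T = 0 := by
  rw [← sum_fiberwise_of_maps_to (g := (· ∩ J)) (t := {σ | i ∈ σ}) (by simp_all)]
  refine sum_eq_zero fun σ hσ => ?_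
  have hiσ : i ∈ σ := (mem_filter.1 hσ).2
  rw [filter_filter, ← hd σ ⟨i, hiσ⟩]
  congr 1
  exact filter_congr fun T _ => ⟨And.right, fun hT => ⟨(mem_inter.1 (hT ▸ hiσ)).1, hT⟩⟩

theorem exists_compensating_correction {ι : Type*} [Fintype ι] [DecidableEq ι] (J : Finset ι)
    (P : Finset (Finset ι)) (f : Finset ι → ℕ) {k : ℕ} (hfk : ∑ T, f T ≤ k)
    (hrep : ∀ T ∉ P, f T ≠ 0 → (T ∩ J).Nonempty → ∃ T' ∈ P, T' ∩ J = T ∩ J) :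
    ∃ d : Finset ι → ℤ, (∀ T ∉ P, d T = f T) ∧ (∀ T, |d T| ≤ k) ∧
      ∀ i ∈ J, ∑ T with i ∈ T, d T = 0 := by
  have hchoice : ∀ σ : Finset ι, ∃ r, (∃ T ∈ P, T ∩ J = σ) → r ∈ P ∧ r ∩ J = σ := fun σ =>
    (em (∃ T ∈ P, T ∩ J = σ)).elim (fun ⟨T, h⟩ => ⟨T, fun _ => h⟩)
      fun h => ⟨∅, fun h' => absurd h' h⟩
  choose rep hrep_mem using hchoice
  set loss : Finset ι → ℕ := fun σ => ∑ T with T ∩ J = σ ∧ T ∉ P, f T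
  have hloss : ∀ σ, loss σ ≤ k := fun σ => (sum_le_sum_of_subset (subset_univ _)).trans hfk
  -- the weight `f` of the `T ∉ P` of a class `{T | T ∩ J = σ}` is paid for by one member
  -- `rep σ ∈ P` of that class
  set d : Finset ι → ℤ := fun T =>
    if T ∈ P then (if rep (T ∩ J) = T then -(loss (T ∩ J) : ℤ) else 0) else f T
  have hclass : ∀ σ : Finset ι, σ.Nonempty → ∑ T with T ∩ J = σ, d T = 0 := by
    intro σ hσ
    rw [sum_ite, filter_filter, filter_filter]
    have hrep_sum : ∑ T with T ∩ J = σ ∧ T ∈ P,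
        (if rep (T ∩ J) = T then -(loss (T ∩ J) : ℤ) else 0) =
          if rep σ ∈ ({T | T ∩ J = σ ∧ T ∈ P} : Finset _) then -(loss σ : ℤ) else 0 := by
      refine (sum_congr rfl fun T hT => ?_).trans (sum_ite_eq _ (rep σ) fun _ => -(loss σ : ℤ))
      rw [(mem_filter.1 hT).2.1]
    rw [hrep_sum, ← Nat.cast_sum]
    change _ + ((loss σ : ℕ) : ℤ) = 0
    by_cases hσP : ∃ T ∈ P, T ∩ J = σ
    · obtain ⟨hP, hJ⟩ := hrep_mem σ hσP
      simp [hP, hJ, loss]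
    · have hnull : loss σ = 0 := sum_eq_zero fun T hT => by
        obtain ⟨hTJ, hTP⟩ := (mem_filter.1 hT).2
        by_contra hf
        obtain ⟨T', hT'P, hT'J⟩ := hrep T hTP hf (hTJ ▸ hσ)
        exact hσP ⟨T', hT'P, hT'J.trans hTJ⟩
      simp [hnull]
  refine ⟨d, fun T hT => if_neg hT, fun T => ?_, fun i hi => sum_filter_mem_eq_zero hclass hi⟩
  by_cases hT : T ∈ P
  · simp only [d, if_pos hT]
    split_ifs <;> simp [hloss]
  · simpa [d, if_neg hT] using (single_le_sum (fun _ _ => Nat.zero_le _) (mem_univ T)).trans hfk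

theorem frequently_exists_abs_mul_sub_le {ι : Type*} [Finite ι] (v : ι → ℝ) {ε : ℝ}
    (hε : 0 < ε) : ∃ᶠ q : ℕ in atTop, ∃ p : ι → ℤ, ∀ t, |q * v t - p t| ≤ ε := by
  obtain ⟨Q, hQ⟩ := exists_nat_gt ε⁻¹
  have hQpos : (0 : ℝ) < Q := (inv_pos.2 hε).trans hQ
  have hfract (x : ℝ) : 0 ≤ Int.fract x * Q := mul_nonneg (Int.fract_nonneg x) hQpos.le
  -- pigeonhole: infinitely many multiples `a • v` have their fractional parts in one box of
  -- side `1 / Q`, and the difference of two of them is the approximation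
  let box (a : ℕ) (t : ι) : Fin Q := ⟨⌊Int.fract (a * v t) * Q⌋₊, (Nat.floor_lt (hfract _)).2 <|
    mul_lt_of_lt_one_left hQpos (Int.fract_lt_one _)⟩
  obtain ⟨b, hb⟩ := Finite.exists_infinite_fiber box
  have hinf : (box ⁻¹' {b}).Infinite := Set.infinite_coe_iff.1 hb
  rw [frequently_atTop]
  intro N
  obtain ⟨a₁, ha₁⟩ := hinf.nonempty
  obtain ⟨a₂, ha₂, hlt⟩ := hinf.exists_gt (a₁ + N)
  refine ⟨a₂ - a₁, by omega, fun t => ⌊a₂ * v t⌋ - ⌊a₁ * v t⌋, fun t => ?_⟩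
  have hbox : ⌊Int.fract (a₂ * v t) * Q⌋ = ⌊Int.fract (a₁ * v t) * Q⌋ := by
    rw [← Int.natCast_floor_eq_floor (hfract _), ← Int.natCast_floor_eq_floor (hfract _)]
    exact congrArg (fun c : Fin Q => (c : ℤ)) (congrFun (ha₂.trans ha₁.symm) t)
  have hclose := Int.abs_sub_lt_one_of_floor_eq_floor hbox
  rw [← sub_mul, abs_mul, abs_of_pos hQpos] at hclose
  have hsub : ((a₂ - a₁ : ℕ) : ℝ) * v t - ((⌊a₂ * v t⌋ - ⌊a₁ * v t⌋ : ℤ) : ℝ) =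
      Int.fract (a₂ * v t) - Int.fract (a₁ * v t) := by
    rw [Nat.cast_sub (by omega), Int.fract, Int.fract]
    push_cast
    ring
  rw [hsub]
  calc _ ≤ 1 / (Q : ℝ) := (lt_div_iff₀ hQpos).2 hclose |>.le
    _ ≤ ε := by rw [one_div]; exact inv_le_of_inv_le₀ hε hQ.le

theorem frequently_exists_int_approx {κ : Type*} [Finite κ] (w : κ → ℝ) {ε : ℝ} (hε : 0 < ε)
    (hε1 : ε < 1) (M : ℤ) :
    ∃ᶠ q : ℕ in atTop, ∃ p : κ → ℤ, (∀ t, |q * w t - p t| ≤ ε) ∧ (∀ t, w t = 0 → p t = 0) ∧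
      ∀ t, 0 < w t → M ≤ p t := by
  have hbig : ∀ᶠ q : ℕ in atTop, ∀ t, 0 < w t → (M + 1 : ℝ) ≤ q * w t :=
    eventually_all.2 fun t => (em (0 < w t)).elim
      (fun ht => ((tendsto_natCast_atTop_atTop.atTop_mul_const ht).eventually_ge_atTop _).mono
        fun _ hq _ => hq)
      fun ht => Eventually.of_forall fun _ h => (ht h).elim
  refine ((frequently_exists_abs_mul_sub_le w hε).and_eventually hbig).mono ?_
  rintro q ⟨⟨p, hp⟩, hq⟩
  refine ⟨p, hp, fun t ht => ?_, fun t ht => ?_⟩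
  · have := hp t
    rw [ht, mul_zero, zero_sub, abs_neg] at this
    exact Int.abs_lt_one_iff.1 (by exact_mod_cast this.trans_lt hε1)
  · have h1 := hq t ht
    have h2 := (abs_le.1 (hp t)).2
    have : (M : ℝ) < p t + 1 := by linarith
    exact Int.lt_add_one_iff.1 (by exact_mod_cast this)

theorem abs_sum_le_card_mul {α : Type*} [Fintype α] (s : Finset α) {a : α → ℝ} {b : ℝ}
    (h : ∀ x, |a x| ≤ b) : |∑ x ∈ s, a x| ≤ Fintype.card α * b := by
  rcases isEmpty_or_nonempty α with hα | ⟨⟨x₀⟩⟩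
  · simp [s.eq_empty_of_isEmpty]
  calc |∑ x ∈ s, a x| ≤ ∑ x ∈ s, |a x| := abs_sum_le_sum_abs _ _
    _ ≤ #s * b := by simpa using sum_le_card_nsmul s _ _ fun x _ => h x
    _ ≤ Fintype.card α * b := by
      gcongr
      · exact (abs_nonneg _).trans (h x₀)
      · exact card_le_univ s

theorem sum_eq_sum_of_abs_mul_sub_le {κ : Type*} [Fintype κ] {w : κ → ℝ} {p : κ → ℤ} {q ε : ℝ}
    (hp : ∀ t, |q * w t - p t| ≤ ε) (hε : 2 * Fintype.card κ * ε < 1) {s s' : Finset κ}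
    (hw : ∑ t ∈ s, w t = ∑ t ∈ s', w t) : ∑ t ∈ s, p t = ∑ t ∈ s', p t := by
  have hround (s : Finset κ) : |(∑ t ∈ s, (p t : ℝ)) - q * ∑ t ∈ s, w t| ≤ Fintype.card κ * ε := by
    rw [mul_sum, ← sum_sub_distrib]
    exact abs_sum_le_card_mul s fun t => by rw [abs_sub_comm]; exact hp t
  have hclose : |((∑ t ∈ s, p t - ∑ t ∈ s', p t : ℤ) : ℝ)| < 1 := by
    have hs := hround s
    rw [hw] at hs
    push_cast
    calc _ ≤ _ := abs_sub_le _ (q * ∑ t ∈ s', w t) _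
      _ ≤ Fintype.card κ * ε + Fintype.card κ * ε :=
          add_le_add hs (by rw [abs_sub_comm]; exact hround s')
      _ < 1 := by linarith
  exact sub_eq_zero.1 (Int.abs_lt_one_iff.1 (by exact_mod_cast hclose))

theorem exists_atom_counts_approx {ι : Type*} [Fintype ι] [DecidableEq ι] (J : Finset ι)
    (P : Finset (Finset ι)) (w : Finset ι → ℝ) (hwP : ∀ T ∈ P, 0 < w T) (hw0 : ∀ T ∉ P, w T = 0)
    (f : Finset ι → ℕ) {k : ℕ} (hfk : ∑ T, f T ≤ k)
    (hrep : ∀ T ∉ P, f T ≠ 0 → (T ∩ J).Nonempty → ∃ T' ∈ P, T' ∩ J = T ∩ J) :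
    ∃ C : ℝ, ∃ᶠ q : ℕ in atTop, ∃ n : Finset ι → ℕ, (∀ T ∉ P, n T = f T) ∧
      (∀ T ∈ P, f T ≤ n T) ∧
      (∀ i ∈ J, ∀ j ∈ J, ∑ T with i ∈ T, w T = ∑ T with j ∈ T, w T →
        ∑ T with i ∈ T, n T = ∑ T with j ∈ T, n T) ∧
      ∀ i, |(∑ T with i ∈ T, n T : ℝ) - q * ∑ T with i ∈ T, w T| ≤ C := by
  obtain ⟨d, hdP, hdk, hdJ⟩ := exists_compensating_correction J P f hfk hrep
  set R := Fintype.card (Finset ι)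
  obtain ⟨ε, hε, hRε⟩ := exists_pos_mul_lt one_pos (2 * R : ℝ)
  have hε1 : ε < 1 := by
    have : (1 : ℝ) ≤ R := by exact_mod_cast Fintype.card_pos
    nlinarith
  refine ⟨R * (ε + k), (frequently_exists_int_approx w hε hε1 (2 * k)).mono ?_⟩
  rintro q ⟨p, hp, hp0, hpP⟩
  have hdle (T : Finset ι) : -(k : ℤ) ≤ d T := (abs_le.1 (hdk T)).1
  have hfT (T : Finset ι) : f T ≤ k :=
    (single_le_sum (fun _ _ => Nat.zero_le _) (mem_univ T)).trans hfk
  have hn (T : Finset ι) : ((p T + d T).toNat : ℤ) = p T + d T := by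
    refine Int.toNat_of_nonneg ?_
    by_cases hT : T ∈ P
    · linarith [hpP T (hwP T hT), hdle T]
    · rw [hp0 T (hw0 T hT), hdP T hT]; positivity
  refine ⟨fun T => (p T + d T).toNat, fun T hT => ?_, fun T hT => ?_, fun i hi j hj hw => ?_,
    fun i => ?_⟩
  · show (p T + d T).toNat = f T
    rw [hp0 T (hw0 T hT), hdP T hT, zero_add, Int.toNat_natCast]
  · have := hpP T (hwP T hT)
    have := hdle T
    have := hfT T
    show f T ≤ (p T + d T).toNat
    omega
  · have hcount (l : ι) (hl : l ∈ J) :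
        ((∑ T with l ∈ T, (p T + d T).toNat : ℕ) : ℤ) = ∑ T with l ∈ T, p T := by
      push_cast [hn]
      rw [sum_add_distrib, hdJ l hl, add_zero]
    exact_mod_cast (hcount i hi).trans
      ((sum_eq_sum_of_abs_mul_sub_le hp (by linarith) hw).trans (hcount j hj).symm)
  · have hnR (T : Finset ι) : (((p T + d T).toNat : ℕ) : ℝ) = p T + d T := by exact_mod_cast hn T
    push_cast [hnR]
    rw [mul_sum, ← sum_sub_distrib]
    refine abs_sum_le_card_mul _ fun T => ?_
    calc |(p T : ℝ) + d T - q * w T| = |((p T : ℝ) - q * w T) + d T| := by ring_nf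
      _ ≤ |(p T : ℝ) - q * w T| + |(d T : ℝ)| := abs_add_le _ _
      _ ≤ ε + k := add_le_add (by rw [abs_sub_comm]; exact hp T) (by exact_mod_cast hdk T)

theorem exists_finset_ncard_inter_approx {Ω ι : Type*} [Fintype ι] [DecidableEq ι]
    {𝒜 ℬ : Set (Set Ω)} (h𝒜 : IsSetRing 𝒜) (hℬ : IsSetRing ℬ) (m : AddContent ℝ≥0∞ 𝒜)
    (hna : ∀ s ∈ 𝒜, s.Finite → m s = 0) (hℬpos : ∀ B ∈ ℬ, B.Nonempty → m B ≠ 0)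
    (X : Finset Ω) {A : ι → Set Ω} (hA : ∀ i, A i ∈ 𝒜) (hAfin : ∀ i, m (A i) ≠ ⊤) :
    ∃ C : ℝ, ∃ᶠ q : ℕ in atTop, ∃ L : Finset Ω, X ⊆ L ∧
      (∀ i j, A i ∈ ℬ → A j ∈ ℬ → m (A i) = m (A j) →
        (↑L ∩ A i).ncard = (↑L ∩ A j).ncard) ∧
      ∀ i, |((↑L ∩ A i).ncard : ℝ) - q * (m (A i)).toReal| ≤ C := by
  classical
  set J : Finset ι := {i | A i ∈ ℬ}
  set P : Finset (Finset ι) := {T | T.Nonempty ∧ m (pattern A ⁻¹' {T}) ≠ 0}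
  set w : Finset ι → ℝ := fun T => if T ∈ P then (m (pattern A ⁻¹' {T})).toReal else 0
  set f : Finset ι → ℕ := fun T => #{x ∈ X | pattern A x = T}
  have hatom_fin {T : Finset ι} {i : ι} (hi : i ∈ T) : m (pattern A ⁻¹' {T}) ≠ ⊤ :=
    ENNReal.sum_ne_top.1 (addContent_eq_sum_pattern h𝒜 hA m i ▸ hAfin i) T (by simpa)
  have hwP (T : Finset ι) (hT : T ∈ P) : 0 < w T := by
    obtain ⟨⟨i, hi⟩, hT0⟩ := (mem_filter.1 hT).2
    simpa [w, hT] using ENNReal.toReal_pos hT0 (hatom_fin hi)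
  have hw0 (T : Finset ι) (hT : T ∉ P) : w T = 0 := if_neg hT
  have hmeas (i : ι) : (m (A i)).toReal = ∑ T with i ∈ T, w T := by
    rw [addContent_eq_sum_pattern h𝒜 hA m i,
      ENNReal.toReal_sum fun T hT => hatom_fin (by simpa using hT)]
    refine sum_congr rfl fun T hT => ?_
    by_cases hTP : T ∈ P
    · exact (if_pos hTP).symm
    · have : m (pattern A ⁻¹' {T}) = 0 := by
        by_contra h
        exact hTP (mem_filter.2 ⟨mem_univ _, ⟨i, by simpa using hT⟩, h⟩)
      simp [w, hTP, this]
  have hfk : ∑ T, f T ≤ #X := (card_eq_sum_card_fiberwise fun _ _ => mem_univ _).ge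
  have hrep (T : Finset ι) (hTP : T ∉ P) (hf : f T ≠ 0) (hTJ : (T ∩ J).Nonempty) :
      ∃ T' ∈ P, T' ∩ J = T ∩ J := by
    obtain ⟨x, hx⟩ := card_ne_zero.1 hf
    obtain ⟨T', hT', hT'0, hT'J⟩ := exists_addContent_ne_zero_of_inter_eq h𝒜 hℬ m hℬpos hA
      (J := J) (fun i hi => (mem_filter.1 hi).2) ⟨x, (mem_filter.1 hx).2⟩ hTJ
    exact ⟨T', by simp [P, hT', hT'0], hT'J⟩
  obtain ⟨C, hC⟩ := exists_atom_counts_approx J P w hwP hw0 f hfk hrep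
  refine ⟨C, hC.mono fun q ⟨n, hnP, hnP', hnJ, hnC⟩ => ?_⟩
  obtain ⟨L, hXL, hcount⟩ := exists_superset_ncard_inter_eq_sum X n
    (fun T => if hT : T ∈ P then hnP' T hT else (hnP T hT).ge)
    (fun T hlt => by
      by_cases hT : T ∈ P
      · obtain ⟨hTne, hT0⟩ := (mem_filter.1 hT).2
        exact fun hfin => hT0 (hna _ (preimage_pattern_mem h𝒜 hA hTne) hfin)
      · exact absurd (hnP T hT) hlt.ne')
  refine ⟨L, hXL, fun i j hi hj hij => ?_, fun i => ?_⟩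
  · rw [hcount, hcount]
    exact hnJ i (by simpa [J]) j (by simpa [J]) (by rw [← hmeas, ← hmeas, hij])
  · rw [hcount, hmeas]
    exact_mod_cast hnC i

theorem eventually_abs_div_sub_div_lt (C α β : ℝ) (hβ : 0 < β) {δ : ℝ} (hδ : 0 < δ) :
    ∀ᶠ q : ℝ in atTop, ∀ a b : ℝ, |a - q * α| ≤ C → |b - q * β| ≤ C →
      0 < b ∧ |a / b - α / β| < δ := by
  set K := C * (|α| + β)
  filter_upwards [(tendsto_id.atTop_mul_const hβ).eventually_ge_atTop (C + K / (δ * β) + 1)]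
    with q hq a b ha hb
  have hC : 0 ≤ C := (abs_nonneg _).trans ha
  have hK : 0 ≤ K := mul_nonneg hC (by positivity)
  have hb_lower : K / (δ * β) + 1 ≤ b := by
    have := (abs_le.1 hb).1
    simp only [id] at hq
    linarith
  have hb_pos : 0 < b := lt_of_lt_of_le (by positivity) hb_lower
  have hnum : |a * β - b * α| ≤ K := calc
    |a * β - b * α| = |(a - q * α) * β - (b - q * β) * α| := by ring_nf
    _ ≤ |a - q * α| * β + |b - q * β| * |α| := by
        refine (abs_sub _ _).trans ?_
        rw [abs_mul, abs_mul, abs_of_pos hβ]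
    _ ≤ C * β + C * |α| := by gcongr
    _ = K := by ring
  have hden : K < δ * (b * β) := by
    have := mul_le_mul_of_nonneg_left hb_lower (by positivity : 0 ≤ δ * β)
    rw [mul_add, mul_div_cancel₀ _ (by positivity), mul_one] at this
    nlinarith
  refine ⟨hb_pos, ?_⟩
  rw [div_sub_div _ _ hb_pos.ne' hβ.ne', abs_div, abs_of_pos (mul_pos hb_pos hβ),
    div_lt_iff₀ (mul_pos hb_pos hβ)]
  linarith

theorem stmt3_general {Ω : Type*} (𝒜 ℬ : Set (Set Ω))
    (h𝒜 : IsRingOfSets 𝒜) (hℬ : IsRingOfSets ℬ)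
    (μ : Set Ω → ℝ≥0∞) (hμ0 : μ ∅ = 0)
    (hadd : ∀ A ∈ 𝒜, ∀ B ∈ 𝒜, Disjoint A B → μ (A ∪ B) = μ A + μ B)
    (hna : ∀ A ∈ 𝒜, A.Finite → μ A = 0)
    (hℬpos : ∀ B ∈ ℬ, B.Nonempty → 0 < μ B ∧ μ B < ⊤)
    (m : ℕ) (hm : 0 < m) {k nsets : ℕ} (x : Fin k → Ω)
    (A : Fin nsets → Set Ω)
    (hAmem : ∀ i, A i ∈ 𝒜) (hAfin : ∀ i, μ (A i) < ⊤) :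
    ∃ lam : Set Ω, lam.Finite ∧
      (∀ i, x i ∈ lam) ∧
      (∀ i j, A i ∈ ℬ → A j ∈ ℬ → μ (A i) = μ (A j) →
        (lam ∩ A i).ncard = (lam ∩ A j).ncard) ∧
      (∀ j, μ (A j) ≠ 0 → 0 < (lam ∩ A j).ncard ∧
        ∀ i, |((lam ∩ A i).ncard : ℝ) / ((lam ∩ A j).ncard : ℝ) -
          (μ (A i)).toReal / (μ (A j)).toReal| < 1 / (m : ℝ)) := by
  classical
  let ν : AddContent ℝ≥0∞ 𝒜 :=
    h𝒜.isSetRing.addContent_of_union μ hμ0 fun hs ht hd => hadd _ hs _ ht hd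
  obtain ⟨C, hC⟩ := exists_finset_ncard_inter_approx h𝒜.isSetRing hℬ.isSetRing ν hna
    (fun B hB hne => (hℬpos B hB hne).1.ne') (univ.image x) hAmem fun i => (hAfin i).ne
  have hratio : ∀ᶠ q : ℕ in atTop, ∀ i j, μ (A j) ≠ 0 → ∀ a b : ℝ,
      |a - q * (μ (A i)).toReal| ≤ C → |b - q * (μ (A j)).toReal| ≤ C →
        0 < b ∧ |a / b - (μ (A i)).toReal / (μ (A j)).toReal| < 1 / m := by
    refine eventually_all.2 fun i => eventually_all.2 fun j => ?_
    by_cases hj : μ (A j) = 0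
    · exact Eventually.of_forall fun _ h => (h hj).elim
    · exact (tendsto_natCast_atTop_atTop.eventually (eventually_abs_div_sub_div_lt C _ _
        (ENNReal.toReal_pos hj (hAfin j).ne) (one_div_pos.2 (Nat.cast_pos.2 hm)))).mono
        fun _ hq _ => hq
  obtain ⟨q, ⟨L, hXL, hℬL, hLC⟩, hq⟩ := (hC.and_eventually hratio).exists
  refine ⟨L, L.finite_toSet, fun i => hXL (mem_image_of_mem x (mem_univ i)), hℬL, fun j hj => ?_⟩
  exact ⟨Nat.cast_pos.1 (hq j j hj _ _ (hLC j) (hLC j)).1,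
    fun i => (hq i j hj _ _ (hLC i) (hLC j)).2⟩

/-- The combinatorial lemma: given a non-atomic finitely additive measure (Ω, 𝒜, μ),
a subring ℬ ⊆ 𝒜 whose nonempty sets have positive finite measure, a positive integer m,
finitely many points x₁,…,x_k and finitely many nonempty sets A₁,…,A_n ∈ 𝒜 of finite
measure, there is a finite λ ⊆ Ω containing the points, counting sets of ℬ of equal
measure equally, and approximating all ratios of measures within 1/m. -/
theorem stmt3 {Ω : Type*} [Nonempty Ω] (𝒜 ℬ : Set (Set Ω))
    (h𝒜 : IsRingOfSets 𝒜) (hℬ : IsRingOfSets ℬ) (hℬ𝒜 : ℬ ⊆ 𝒜)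
    (μ : Set Ω → ℝ≥0∞) (hμ0 : μ ∅ = 0)
    (hadd : ∀ A ∈ 𝒜, ∀ B ∈ 𝒜, Disjoint A B → μ (A ∪ B) = μ A + μ B)
    (hna : ∀ A ∈ 𝒜, A.Finite → μ A = 0)
    (hℬpos : ∀ B ∈ ℬ, B.Nonempty → 0 < μ B ∧ μ B < ⊤)
    (m : ℕ) (hm : 0 < m) {k nsets : ℕ} (x : Fin k → Ω)
    (A : Fin nsets → Set Ω)
    (hAmem : ∀ i, A i ∈ 𝒜) (hAne : ∀ i, (A i).Nonempty) (hAfin : ∀ i, μ (A i) < ⊤) :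
    ∃ lam : Set Ω, lam.Finite ∧
      (∀ i, x i ∈ lam) ∧
      (∀ i j, A i ∈ ℬ → A j ∈ ℬ → μ (A i) = μ (A j) →
        (lam ∩ A i).ncard = (lam ∩ A j).ncard) ∧
      (∀ j, μ (A j) ≠ 0 → 0 < (lam ∩ A j).ncard ∧
        ∀ i, |((lam ∩ A i).ncard : ℝ) / ((lam ∩ A j).ncard : ℝ) -
          (μ (A i)).toReal / (μ (A j)).toReal| < 1 / (m : ℝ)) :=
  stmt3_general 𝒜 ℬ h𝒜 hℬ μ hμ0 hadd hna hℬpos m hm x A hAmem hAfin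
end

section
/- There exist a linear ordered field F with an ordered ring homomorphism ι : ℝ → F and an elementary numerosity n : P(ℝ) → F such that: (1) n([x, x+a)) = n([y, y+a)) for all x, y ∈ ℝ and all real a > 0; (2) n([x, x+a)) = ι(a) · n([0,1)) for all x ∈ ℝ and all rational a > 0; (3) sh( n(X) / n([0,1)) ) = μ_L(X) for every Lebesgue measurable set X ⊆ ℝ, where μ_L is Lebesgue measure (the equality holding in [0,+∞]); and (4) sh( n(X) / n([0,1)) ) ≤ μ̄_L(X) for every set X ⊆ ℝ, where μ̄_L is Lebesgue outer measure. -/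
open scoped ENNReal

/-- An elementary numerosity on Ω together with its superreal field of values:
a linear ordered field F, an ordered ring homomorphism ι : ℝ → F, and a function
num : P(Ω) → F which is nonnegative, gives value 1 to all singletons, and is
additive on disjoint sets. -/
structure NumerositySystem (Ω : Type) : Type 1 where
  F : Type
  [fieldF : Field F]
  [linOrdF : LinearOrder F]
  [strictOrdF : IsStrictOrderedRing F]
  ι : ℝ →+*o F
  num : Set Ω → F
  nonneg : ∀ X : Set Ω, 0 ≤ num X
  singleton_eq_one : ∀ x : Ω, num {x} = 1
  additive : ∀ A B : Set Ω, Disjoint A B → num (A ∪ B) = num A + num B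

attribute [instance] NumerositySystem.fieldF
attribute [instance] NumerositySystem.linOrdF
attribute [instance] NumerositySystem.strictOrdF

/-!
The numerosity is an ultrapower. Indices are finitely supported weights `w : ℝ →₀ ℝ`, and
`num X` is the germ of `mass w X / w 0` along an ultrafilter containing, for each finite `P ⊆ ℝ`
and finitely many measurable `X` with neighbourhoods `V` of `volume X`, the weights that give the
same positive mass to every point of `P`, mass `v - u` to `[u, v)` for `u ≤ v` in `P`, and a mass
in `V` to each `X`. Then `num X / num [0, 1)` is the germ of `mass w X`, whose shadow is the
ultrafilter limit of `mass w X`: this is `volume X` when `X` is squeezed between measurable sets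
of the same measure, and at most `volume X` through a measurable hull.

Such weights exist because a point mass `δ` at `p` can stand in for Lebesgue measure on the bump
`[p, p + δ)`. Put mass `δ` on each point of `P` and discretize Lebesgue measure on a large window
minus the bumps, one point mass per atom of the finitely many sets involved. When `δ` is below
the gaps of `P`, each bump lies inside or outside each `[u, v)`, so these intervals get their
exact length, while each `X` is off by at most `δ · #P`.
-/

open MeasureTheory Filter Set Topology

noncomputable section

section Mass

variable {α : Type*}

def mass (w : α →₀ ℝ) (X : Set α) : ℝ :=
  Finsupp.linearCombination ℝ (X.indicator 1) w

lemma mass_add (w₁ w₂ : α →₀ ℝ) (X : Set α) :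
    mass (w₁ + w₂) X = mass w₁ X + mass w₂ X :=
  map_add _ _ _

lemma mass_sum {ι : Type*} (s : Finset ι) (w : ι → α →₀ ℝ) (X : Set α) :
    mass (∑ i ∈ s, w i) X = ∑ i ∈ s, mass (w i) X :=
  map_sum _ _ _

lemma mass_single (a : α) (c : ℝ) (X : Set α) :
    mass (Finsupp.single a c) X = X.indicator (fun _ => c) a := by
  by_cases ha : a ∈ X <;> simp [mass, ha]

lemma mass_union (w : α →₀ ℝ) {A B : Set α} (h : Disjoint A B) :
    mass w (A ∪ B) = mass w A + mass w B := by
  simp only [mass, Finsupp.linearCombination_apply, indicator_union_of_disjoint h, smul_add,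
    Finsupp.sum_add]

lemma mass_singleton (w : α →₀ ℝ) (x : α) : mass w {x} = w x := by
  induction w using Finsupp.induction_linear with
  | zero => simp [mass]
  | add w₁ w₂ h₁ h₂ => rw [mass_add, h₁, h₂, Finsupp.add_apply]
  | single a c => by_cases h : a = x <;> simp [mass_single, h]

lemma mass_nonneg {w : α →₀ ℝ} (hw : 0 ≤ w) (X : Set α) : 0 ≤ mass w X :=
  Finsupp.sum_nonneg fun t _ => smul_nonneg (hw t) (indicator_nonneg (fun _ _ => zero_le_one) t)

lemma mass_mono {w : α →₀ ℝ} (hw : 0 ≤ w) {X Y : Set α} (h : X ⊆ Y) :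
    mass w X ≤ mass w Y := by
  rw [← union_sdiff_cancel h, mass_union w disjoint_sdiff_right]
  exact le_add_of_nonneg_right (mass_nonneg hw _)

end Mass

section Discretization

variable {α : Type*} [MeasurableSpace α] (ν : Measure α) [NullSingletonClass ν] {P : Set α}

lemma exists_mass_eq_measureReal_inter (A : Set α) (hP : P.Countable) :
    ∃ w : α →₀ ℝ, 0 ≤ w ∧ (∀ p ∈ P, w p = 0) ∧
      ∀ X, (A ⊆ X ∨ Disjoint A X) → mass w X = ν.real (A ∩ X) := by
  by_cases hA : (A \ P).Nonempty
  · obtain ⟨x, hxA, hxP⟩ := hA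
    refine ⟨Finsupp.single x (ν.real A), Finsupp.single_nonneg.2 measureReal_nonneg,
      fun p hp => Finsupp.single_eq_of_ne (ne_of_mem_of_not_mem hp hxP), fun X hX => ?_⟩
    rcases hX with hAX | hAX
    · rw [mass_single, indicator_of_mem (hAX hxA), inter_eq_left.2 hAX]
    · rw [mass_single, indicator_of_notMem (disjoint_left.1 hAX hxA), hAX.inter_eq,
        measureReal_empty]
  · have hAP : A ⊆ P := fun x hx => not_not.1 fun hxP => hA ⟨x, hx, hxP⟩
    have hA0 : ν A = 0 := measure_mono_null hAP (hP.measure_zero ν)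
    refine ⟨0, le_rfl, fun _ _ => rfl, fun X _ => ?_⟩
    rw [measureReal_def, measure_mono_null inter_subset_left hA0]
    simp [mass]

lemma exists_mass_preimage_eq_measureReal [IsFiniteMeasure ν] {β : Type*} [Fintype β]
    [MeasurableSpace β] [MeasurableSingletonClass β] {τ : α → β} (hτ : Measurable τ)
    (hP : P.Countable) :
    ∃ w : α →₀ ℝ, 0 ≤ w ∧ (∀ p ∈ P, w p = 0) ∧
      ∀ T : Set β, mass w (τ ⁻¹' T) = ν.real (τ ⁻¹' T) := by
  choose w hw₀ hwP hw using fun b => exists_mass_eq_measureReal_inter ν (τ ⁻¹' {b}) hP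
  refine ⟨∑ b, w b, Finset.sum_nonneg fun b _ => hw₀ b, fun p hp => ?_, fun T => ?_⟩
  · simp [Finsupp.finsetSum_apply, hwP _ p hp]
  have hfiber : ∀ b, τ ⁻¹' {b} ⊆ τ ⁻¹' T ∨ Disjoint (τ ⁻¹' {b}) (τ ⁻¹' T) := fun b =>
    (em (b ∈ T)).imp (fun hb => preimage_mono (singleton_subset_iff.2 hb))
      (fun hb => disjoint_singleton_left.2 hb |>.preimage τ)
  rw [mass_sum, Finset.sum_congr rfl fun b _ => hw b _ (hfiber b)]
  have := sum_measureReal_preimage_singleton (μ := ν.restrict (τ ⁻¹' T)) Finset.univ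
    (fun b _ => hτ (measurableSet_singleton b))
  simpa [measureReal_restrict_apply (hτ (measurableSet_singleton _)), inter_comm] using this

lemma exists_mass_eq_measureReal [IsFiniteMeasure ν] (𝓕 : Finset (Set α))
    (h𝓕 : ∀ Y ∈ 𝓕, MeasurableSet Y) (hP : P.Countable) :
    ∃ w : α →₀ ℝ, 0 ≤ w ∧ (∀ p ∈ P, w p = 0) ∧ ∀ Y ∈ 𝓕, mass w Y = ν.real Y := by
  classical
  -- the fibres of `τ` are the atoms of `𝓕`
  let τ : α → 𝓕 → Bool := fun t Y => decide (t ∈ Y.1)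
  have hτ : Measurable τ := measurable_pi_lambda _ fun Y =>
    measurable_to_bool (by convert h𝓕 Y.1 Y.2; ext; simp [τ])
  obtain ⟨w, hw₀, hwP, hw⟩ := exists_mass_preimage_eq_measureReal ν hτ hP
  refine ⟨w, hw₀, hwP, fun Y hY => ?_⟩
  have hYτ : Y = τ ⁻¹' {σ | σ ⟨Y, hY⟩ = true} := by ext t; simp [τ]
  rw [hYτ, hw]

end Discretization

section Bumps

variable {P : Finset ℝ} {δ : ℝ}

def bumps (P : Finset ℝ) (δ : ℝ) : Set ℝ := ⋃ p ∈ P, Ico p (p + δ)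

lemma measurableSet_bumps : MeasurableSet (bumps P δ) :=
  P.measurableSet_biUnion fun _ _ => measurableSet_Ico

lemma volume_real_bumps_le (hδ : 0 ≤ δ) : volume.real (bumps P δ) ≤ P.card * δ := by
  refine (measureReal_biUnion_finset_le _ _).trans_eq ?_
  simp [Real.volume_real_Ico_of_le (le_add_of_nonneg_right hδ)]

lemma bumps_subset_Ico {N : ℝ} (hPN : ∀ p ∈ P, -N ≤ p ∧ p + δ ≤ N) :
    bumps P δ ⊆ Ico (-N) N :=
  iUnion₂_subset fun p hp => Ico_subset_Ico (hPN p hp).1 (hPN p hp).2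

lemma add_le_or_le_of_gap (hgap : ∀ p ∈ P, ∀ q ∈ P, p < q → p + δ ≤ q) {p q : ℝ}
    (hp : p ∈ P) (hq : q ∈ P) : p + δ ≤ q ∨ q ≤ p :=
  (lt_or_ge p q).imp (hgap p hp q hq) id

lemma pairwiseDisjoint_Ico_add (hgap : ∀ p ∈ P, ∀ q ∈ P, p < q → p + δ ≤ q) :
    (P : Set ℝ).PairwiseDisjoint fun p => Ico p (p + δ) := by
  intro p hp q hq hpq
  rw [Function.onFun, disjoint_left]
  rintro t ⟨hpt, htp⟩ ⟨hqt, htq⟩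
  rcases lt_or_gt_of_ne hpq with h | h
  · linarith [hgap p hp q hq h]
  · linarith [hgap q hq p hp h]

lemma volume_real_Ico_inter_bumps (hgap : ∀ p ∈ P, ∀ q ∈ P, p < q → p + δ ≤ q) (hδ : 0 ≤ δ)
    {u v : ℝ} (hu : u ∈ P) (hv : v ∈ P) :
    volume.real (Ico u v ∩ bumps P δ) = ∑ p ∈ P, (Ico u v).indicator (fun _ => δ) p := by
  rw [bumps, inter_iUnion₂, measureReal_biUnion_finset (f := fun p => Ico u v ∩ Ico p (p + δ))
    ((pairwiseDisjoint_Ico_add hgap).mono fun _ => inter_subset_right)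
    (fun _ _ => measurableSet_Ico.inter measurableSet_Ico)
    (fun _ _ => measure_ne_top_of_subset inter_subset_left measure_Ico_lt_top.ne)]
  refine Finset.sum_congr rfl fun p hp => ?_
  by_cases hpuv : p ∈ Ico u v
  · have hpv : p + δ ≤ v := hgap p hp v hv hpuv.2
    rw [indicator_of_mem hpuv, inter_eq_right.2 (Ico_subset_Ico hpuv.1 hpv),
      Real.volume_real_Ico_of_le (by linarith)]
    ring
  · have hdisj : Disjoint (Ico u v) (Ico p (p + δ)) := by
      rw [Ico_disjoint_Ico]
      rcases add_le_or_le_of_gap hgap hp hu with h | h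
      · exact min_le_of_right_le (h.trans (le_max_left _ _))
      · exact min_le_of_left_le ((not_lt.1 fun h' => hpuv ⟨h, h'⟩).trans (le_max_right _ _))
    rw [indicator_of_notMem hpuv, hdisj.inter_eq, measureReal_empty]

lemma volume_real_Ico_sdiff_bumps (hgap : ∀ p ∈ P, ∀ q ∈ P, p < q → p + δ ≤ q) (hδ : 0 ≤ δ)
    {u v : ℝ} (hu : u ∈ P) (hv : v ∈ P) (huv : u ≤ v) :
    volume.real (Ico u v \ bumps P δ) =
      v - u - ∑ p ∈ P, (Ico u v).indicator (fun _ => δ) p := by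
  rw [← volume_real_Ico_inter_bumps hgap hδ hu hv, ← Real.volume_real_Ico_of_le huv,
    ← measureReal_sdiff_add_inter measurableSet_bumps measure_Ico_lt_top.ne, add_sub_cancel_right]

end Bumps

theorem exists_weight_mass_Ico_eq_sub {P : Finset ℝ} {δ N : ℝ} (𝓧 : Finset (Set ℝ))
    (h𝓧 : ∀ X ∈ 𝓧, MeasurableSet X) (hδ : 0 < δ)
    (hgap : ∀ p ∈ P, ∀ q ∈ P, p < q → p + δ ≤ q)
    (hPN : ∀ p ∈ P, -N ≤ p ∧ p + δ ≤ N) :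
    ∃ w : ℝ →₀ ℝ, 0 ≤ w ∧ (∀ p ∈ P, w p = δ) ∧
      (∀ u ∈ P, ∀ v ∈ P, u ≤ v → mass w (Ico u v) = v - u) ∧
      ∀ X ∈ 𝓧, |mass w X - volume.real (X ∩ Ico (-N) N)| ≤ P.card * δ := by
  classical
  have : IsFiniteMeasure (volume.restrict (Ico (-N) N \ bumps P δ)) :=
    isFiniteMeasure_restrict.2 (measure_ne_top_of_subset sdiff_subset measure_Ico_lt_top.ne)
  set 𝓕 := 𝓧 ∪ (P ×ˢ P).image fun x => Ico x.1 x.2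
  have h𝓕 : ∀ Y ∈ 𝓕, MeasurableSet Y := by
    simp only [𝓕, Finset.mem_union, Finset.mem_image]
    rintro Y (hY | ⟨x, -, rfl⟩)
    exacts [h𝓧 Y hY, measurableSet_Ico]
  obtain ⟨w₀, hw₀, hw₀P, hw₀𝓕⟩ := exists_mass_eq_measureReal
    (volume.restrict (Ico (-N) N \ bumps P δ)) 𝓕 h𝓕 P.countable_toSet
  have hmass : ∀ Y ∈ 𝓕, mass (∑ p ∈ P, Finsupp.single p δ + w₀) Y =
      ∑ p ∈ P, Y.indicator (fun _ => δ) p + volume.real ((Y ∩ Ico (-N) N) \ bumps P δ) :=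
    fun Y hY => by
      rw [mass_add, mass_sum, hw₀𝓕 Y hY, measureReal_restrict_apply (h𝓕 Y hY),
        inter_sdiff_assoc]
      simp only [mass_single]
  refine ⟨∑ p ∈ P, Finsupp.single p δ + w₀,
    add_nonneg (Finset.sum_nonneg fun p _ => Finsupp.single_nonneg.2 hδ.le) hw₀,
    fun p hp => by simp [Finsupp.single_apply, hp, hw₀P p hp], fun u hu v hv huv => ?_,
    fun X hX => ?_⟩
  · have hY : Ico u v ∈ 𝓕 := Finset.mem_union_right _
      (Finset.mem_image.2 ⟨(u, v), Finset.mem_product.2 ⟨hu, hv⟩, rfl⟩)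
    have hsub : Ico u v ⊆ Ico (-N) N := Ico_subset_Ico (hPN u hu).1 (by linarith [(hPN v hv).2])
    rw [hmass _ hY, inter_eq_left.2 hsub, volume_real_Ico_sdiff_bumps hgap hδ.le hu hv huv]
    ring
  · have hpoints : ∑ p ∈ P, X.indicator (fun _ => δ) p ≤ P.card * δ := by
      simpa using Finset.sum_le_card_nsmul P _ δ fun p _ =>
        indicator_le_self' (fun _ _ => hδ.le) p
    have hbumps : volume.real (X ∩ Ico (-N) N ∩ bumps P δ) ≤ P.card * δ :=
      (measureReal_mono inter_subset_right (measure_ne_top_of_subset (bumps_subset_Ico hPN)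
        measure_Ico_lt_top.ne)).trans (volume_real_bumps_le hδ.le)
    have hsplit := measureReal_sdiff_add_inter (μ := volume) (s := X ∩ Ico (-N) N)
      (measurableSet_bumps (P := P) (δ := δ))
      (measure_ne_top_of_subset inter_subset_right measure_Ico_lt_top.ne)
    rw [hmass X (Finset.mem_union_left _ hX), ← hsplit,
      add_comm _ (volume.real (X ∩ Ico (-N) N ∩ bumps P δ)), add_sub_add_right_eq_sub]
    exact abs_sub_le_of_nonneg_of_le (Finset.sum_nonneg fun p _ =>
      indicator_nonneg (fun _ _ => hδ.le) p) hpoints measureReal_nonneg hbumps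

structure IsGoodWeight (P : Finset ℝ) (𝓧 : Finset (Set ℝ × Set ℝ≥0∞)) (w : ℝ →₀ ℝ) :
    Prop where
  nonneg : 0 ≤ w
  apply_zero_pos : 0 < w 0
  apply_eq : ∀ p ∈ P, w p = w 0
  mass_Ico : ∀ u ∈ P, ∀ v ∈ P, u ≤ v → mass w (Ico u v) = v - u
  ofReal_mass_mem : ∀ XV ∈ 𝓧, MeasurableSet XV.1 → XV.2 ∈ 𝓝 (volume XV.1) →
    ENNReal.ofReal (mass w XV.1) ∈ XV.2

lemma IsGoodWeight.mono {P P' : Finset ℝ} {𝓧 𝓧' : Finset (Set ℝ × Set ℝ≥0∞)} {w : ℝ →₀ ℝ}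
    (h : IsGoodWeight P' 𝓧' w) (hP : P ⊆ P') (h𝓧 : 𝓧 ⊆ 𝓧') : IsGoodWeight P 𝓧 w where
  nonneg := h.nonneg
  apply_zero_pos := h.apply_zero_pos
  apply_eq p hp := h.apply_eq p (hP hp)
  mass_Ico u hu v hv := h.mass_Ico u (hP hu) v (hP hv)
  ofReal_mass_mem XV hXV := h.ofReal_mass_mem XV (h𝓧 hXV)

lemma eventually_forall_neg_le_and_add_le (P : Finset ℝ) (δ : ℝ) :
    ∀ᶠ N in atTop, ∀ p ∈ P, -N ≤ p ∧ p + δ ≤ N :=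
  (eventually_all_finset P).2 fun p _ => by
    filter_upwards [eventually_ge_atTop (-p), eventually_ge_atTop (p + δ)] with N h₁ h₂
    exact ⟨by linarith, h₂⟩

lemma eventually_forall_add_le_of_lt (P : Finset ℝ) :
    ∀ᶠ δ in 𝓝 (0 : ℝ), ∀ p ∈ P, ∀ q ∈ P, p < q → p + δ ≤ q :=
  (eventually_all_finset P).2 fun p _ => (eventually_all_finset P).2 fun q _ =>
    eventually_imp_distrib_left.2 fun hpq => by
      filter_upwards [eventually_le_nhds (sub_pos.2 hpq)] with δ hδ
      linarith

lemma eventually_eventually_nhds_measureReal_inter_Ico {X : Set ℝ} {V : Set ℝ≥0∞}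
    (hV : V ∈ 𝓝 (volume X)) :
    ∀ᶠ N in atTop, ∀ᶠ m in 𝓝 (volume.real (X ∩ Ico (-N) N)), ENNReal.ofReal m ∈ V := by
  have hmono : Monotone fun N : ℝ => X ∩ Ico (-N) N := fun M N h =>
    inter_subset_inter_right X (Ico_subset_Ico (neg_le_neg h) h)
  have hX : ⋃ N : ℝ, X ∩ Ico (-N) N = X := by
    refine (iUnion_subset fun _ => inter_subset_left).antisymm fun t ht => mem_iUnion.2 ?_
    exact ⟨|t| + 1, ht, by linarith [neg_abs_le t], by linarith [le_abs_self t]⟩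
  have hlim := tendsto_measure_iUnion_atTop (μ := volume) hmono
  rw [hX] at hlim
  filter_upwards [hlim (interior_mem_nhds.2 hV)] with N hN
  rw [mem_preimage, Function.comp_apply,
    ← ENNReal.ofReal_toReal (measure_ne_top_of_subset inter_subset_right measure_Ico_lt_top.ne)]
    at hN
  exact mem_of_superset (ENNReal.continuous_ofReal.continuousAt.preimage_mem_nhds
    (isOpen_interior.mem_nhds hN)) fun _ hm => interior_subset (s := V) hm

lemma eventually_forall_abs_sub_le_mul {r c : ℝ} {Q : ℝ → Prop} (h : ∀ᶠ m in 𝓝 r, Q m) :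
    ∀ᶠ δ in 𝓝 (0 : ℝ), ∀ m, |m - r| ≤ c * δ → Q m := by
  obtain ⟨ε, hε, hQ⟩ := Metric.eventually_nhds_iff.1 h
  have hcδ : Tendsto (fun δ : ℝ => c * δ) (𝓝 0) (𝓝 0) := by
    simpa using (continuous_const_mul c).tendsto 0
  filter_upwards [hcδ (Iio_mem_nhds hε)] with δ hδ m hm
  exact hQ (by rw [Real.dist_eq]; exact hm.trans_lt hδ)

theorem exists_isGoodWeight (P : Finset ℝ) (𝓧 : Finset (Set ℝ × Set ℝ≥0∞)) :
    ∃ w, IsGoodWeight P 𝓧 w := by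
  classical
  set P' := insert 0 P
  set 𝓨 := 𝓧.filter fun XV => MeasurableSet XV.1 ∧ XV.2 ∈ 𝓝 (volume XV.1)
  have hN := (eventually_forall_neg_le_and_add_le P' 1).and
    ((eventually_all_finset 𝓨).2 fun XV hXV =>
      eventually_eventually_nhds_measureReal_inter_Ico (Finset.mem_filter.1 hXV).2.2)
  obtain ⟨N, hNP, hN𝓨⟩ := hN.exists
  have hsmall := (eventually_le_nhds zero_lt_one).and ((eventually_forall_add_le_of_lt P').and
    ((eventually_all_finset 𝓨).2 fun XV hXV =>
      eventually_forall_abs_sub_le_mul (c := P'.card) (hN𝓨 XV hXV)))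
  obtain ⟨δ, ⟨hδ1, hgap, hδ𝓨⟩, hδ⟩ :=
    ((hsmall.filter_mono nhdsWithin_le_nhds).and self_mem_nhdsWithin).exists (f := 𝓝[>] 0)
  obtain ⟨w, hw₀, hwP, hwIco, hw𝓨⟩ := exists_weight_mass_Ico_eq_sub (𝓨.image Prod.fst)
    (fun X hX => by
      obtain ⟨XV, hXV, rfl⟩ := Finset.mem_image.1 hX
      exact (Finset.mem_filter.1 hXV).2.1)
    hδ hgap fun p hp => ⟨(hNP p hp).1, by linarith [(hNP p hp).2]⟩
  have hw0 : w 0 = δ := hwP 0 (Finset.mem_insert_self 0 P)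
  refine ⟨w, hw₀, hw0 ▸ hδ, fun p hp => by rw [hwP p (Finset.mem_insert_of_mem hp), hw0],
    fun u hu v hv => hwIco u (Finset.mem_insert_of_mem hu) v (Finset.mem_insert_of_mem hv),
    fun XV hXV hX hV => ?_⟩
  have hXV' : XV ∈ 𝓨 := Finset.mem_filter.2 ⟨hXV, hX, hV⟩
  exact hδ𝓨 XV hXV' _ (hw𝓨 _ (Finset.mem_image_of_mem _ hXV'))

section Ultrapower

variable {I : Type*} (U : Ultrafilter I)

def germConst : ℝ →+*o (U : Filter I).Germ ℝ where
  toRingHom := (Germ.coeRingHom (U : Filter I)).comp (Pi.constRingHom I ℝ)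
  monotone' _ _ h := Germ.const_le h

variable {U}

lemma infinitesimal_coe_sub_germConst_iff {g : I → ℝ} {r : ℝ} :
    Infinitesimal (germConst U) (↑g - germConst U r) ↔ Tendsto g U (𝓝 r) := by
  have hk : ∀ k : ℕ, (-germConst U (1 / k) < ↑g - germConst U r ∧
      ↑g - germConst U r < germConst U (1 / k)) ↔ ∀ᶠ i in U, |g i - r| < 1 / k := fun k => by
    simp only [abs_lt, eventually_and]
    exact and_congr Germ.coe_lt Germ.coe_lt
  simp only [Infinitesimal, hk, Metric.tendsto_nhds, Real.dist_eq]
  refine ⟨fun h ε hε => ?_, fun h k hk => h _ (by positivity)⟩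
  obtain ⟨k, hk⟩ := exists_nat_one_div_lt hε
  filter_upwards [h (k + 1) k.succ_pos] with i hi
  exact hi.trans (by exact_mod_cast hk)

lemma sh_coe_eq_of_tendsto {g : I → ℝ} {a : ℝ≥0∞} (hg : ∀ᶠ i in U, 0 ≤ g i)
    (h : Tendsto (fun i => ENNReal.ofReal (g i)) U (𝓝 a)) : sh (germConst U) ↑g = a := by
  by_cases ha : a = ⊤
  · subst ha
    rw [sh, dif_neg]
    rintro ⟨r, hr⟩
    exact not_tendsto_atTop_of_tendsto_nhds (infinitesimal_coe_sub_germConst_iff.1 hr)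
      (ENNReal.tendsto_ofReal_nhds_top.1 h)
  · have hg' : Tendsto g U (𝓝 a.toReal) := ((ENNReal.tendsto_toReal ha).comp h).congr'
      (hg.mono fun i hi => ENNReal.toReal_ofReal hi)
    have hex : ∃ r, Infinitesimal (germConst U) (↑g - germConst U r) :=
      ⟨_, infinitesimal_coe_sub_germConst_iff.2 hg'⟩
    rw [sh, dif_pos hex,
      tendsto_nhds_unique (infinitesimal_coe_sub_germConst_iff.1 hex.choose_spec) hg',
      ENNReal.ofReal_toReal ha]

lemma sh_coe_le_of_tendsto {g h : I → ℝ} {a : ℝ≥0∞} (hg : ∀ᶠ i in U, 0 ≤ g i)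
    (hgh : ∀ᶠ i in U, g i ≤ h i) (hh : Tendsto (fun i => ENNReal.ofReal (h i)) U (𝓝 a)) :
    sh (germConst U) ↑g ≤ a := by
  obtain ⟨b, -, hb⟩ :=
    isCompact_univ.ultrafilter_le_nhds (U.map fun i => ENNReal.ofReal (g i)) (by simp)
  rw [sh_coe_eq_of_tendsto hg hb]
  exact le_of_tendsto_of_tendsto hb hh (hgh.mono fun i hi => ENNReal.ofReal_le_ofReal hi)

end Ultrapower

def goodWeights : Filter (ℝ →₀ ℝ) :=
  ⨅ D : Finset ℝ × Finset (Set ℝ × Set ℝ≥0∞), 𝓟 {w | IsGoodWeight D.1 D.2 w}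

instance : goodWeights.NeBot :=
  iInf_neBot_of_directed'
    (Antitone.directed_ge fun _ _ h =>
      principal_mono.2 fun _ hw => hw.mono (Prod.le_def.1 h).1 (Prod.le_def.1 h).2)
    fun D => principal_neBot_iff.2 (exists_isGoodWeight D.1 D.2)

def weightUltrafilter : Ultrafilter (ℝ →₀ ℝ) := Ultrafilter.of goodWeights

lemma eventually_isGoodWeight (P : Finset ℝ) (𝓧 : Finset (Set ℝ × Set ℝ≥0∞)) :
    ∀ᶠ w in (weightUltrafilter : Filter (ℝ →₀ ℝ)), IsGoodWeight P 𝓧 w :=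
  Ultrafilter.of_le goodWeights (mem_iInf_of_mem (P, 𝓧) (mem_principal_self _))

lemma eventually_nonneg_and_apply_zero_pos :
    ∀ᶠ w in (weightUltrafilter : Filter (ℝ →₀ ℝ)), 0 ≤ w ∧ 0 < w 0 :=
  (eventually_isGoodWeight ∅ ∅).mono fun _ hw => ⟨hw.nonneg, hw.apply_zero_pos⟩

lemma eventually_mass_nonneg (X : Set ℝ) :
    ∀ᶠ w in (weightUltrafilter : Filter (ℝ →₀ ℝ)), 0 ≤ mass w X :=
  eventually_nonneg_and_apply_zero_pos.mono fun _ hw => mass_nonneg hw.1 X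

lemma eventually_mass_le_mass {X Y : Set ℝ} (h : X ⊆ Y) :
    ∀ᶠ w in (weightUltrafilter : Filter (ℝ →₀ ℝ)), mass w X ≤ mass w Y :=
  eventually_nonneg_and_apply_zero_pos.mono fun _ hw => mass_mono hw.1 h

lemma eventually_mass_Ico {u v : ℝ} (huv : u ≤ v) :
    ∀ᶠ w in (weightUltrafilter : Filter (ℝ →₀ ℝ)), mass w (Ico u v) = v - u :=
  (eventually_isGoodWeight {u, v} ∅).mono fun _ hw => hw.mass_Ico u (by simp) v (by simp) huv

lemma tendsto_ofReal_mass {X : Set ℝ} (hX : MeasurableSet X) :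
    Tendsto (fun w => ENNReal.ofReal (mass w X)) weightUltrafilter (𝓝 (volume X)) :=
  fun V hV => (eventually_isGoodWeight ∅ {(X, V)}).mono fun _ hw =>
    hw.ofReal_mass_mem (X, V) (Finset.mem_singleton_self _) hX hV

lemma tendsto_ofReal_mass_of_nullMeasurableSet {X : Set ℝ} (hX : NullMeasurableSet X volume) :
    Tendsto (fun w => ENNReal.ofReal (mass w X)) weightUltrafilter (𝓝 (volume X)) := by
  obtain ⟨X₁, hX₁X, hX₁, hX₁ae⟩ := hX.exists_measurable_subset_ae_eq
  obtain ⟨X₂, hXX₂, hX₂, hX₂ae⟩ := hX.exists_measurable_superset_ae_eq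
  refine tendsto_of_tendsto_of_tendsto_of_le_of_le'
    (measure_congr hX₁ae ▸ tendsto_ofReal_mass hX₁)
    (measure_congr hX₂ae ▸ tendsto_ofReal_mass hX₂)
    ((eventually_mass_le_mass hX₁X).mono fun _ h => ENNReal.ofReal_le_ofReal h)
    ((eventually_mass_le_mass hXX₂).mono fun _ h => ENNReal.ofReal_le_ofReal h)

def numerosity (X : Set ℝ) : (weightUltrafilter : Filter (ℝ →₀ ℝ)).Germ ℝ :=
  ↑fun w : ℝ →₀ ℝ => mass w X / w 0

def numerositySystem : NumerositySystem ℝ where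
  F := (weightUltrafilter : Filter (ℝ →₀ ℝ)).Germ ℝ
  ι := germConst weightUltrafilter
  num := numerosity
  nonneg X := Germ.coe_nonneg.2 <| eventually_nonneg_and_apply_zero_pos.mono fun _ hw =>
    div_nonneg (mass_nonneg hw.1 X) hw.2.le
  singleton_eq_one x := Germ.coe_eq.2 <| (eventually_isGoodWeight {x} ∅).mono fun w hw => by
    simp [mass_singleton, hw.apply_eq x (by simp), hw.apply_zero_pos.ne']
  additive A B h := by
    simp only [numerosity, ← Germ.coe_add, mass_union _ h, add_div]
    rfl

lemma numerosity_Ico_add (x : ℝ) {a : ℝ} (ha : 0 ≤ a) :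
    numerosity (Ico x (x + a)) = germConst weightUltrafilter a * numerosity (Ico 0 1) := by
  refine Germ.coe_eq.2 ?_
  filter_upwards [eventually_mass_Ico (u := x) (le_add_of_nonneg_right ha),
    eventually_mass_Ico zero_le_one] with w hxa h01
  simp [hxa, h01, div_eq_mul_inv]

lemma numerosity_div_numerosity_Ico (X : Set ℝ) :
    numerosity X / numerosity (Ico 0 1) = ↑fun w : ℝ →₀ ℝ => mass w X := by
  refine Germ.coe_eq.2 ?_
  filter_upwards [eventually_nonneg_and_apply_zero_pos, eventually_mass_Ico zero_le_one]
    with w hw h01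
  simp [h01, hw.2.ne']

end

/-- There is an elementary numerosity n on ℝ which is invariant on half-open intervals
of equal length, rescales by rational factors, and whose ratio to the unit n([0,1))
has shadow equal to Lebesgue measure on Lebesgue measurable sets, and shadow at most
the Lebesgue outer measure on arbitrary sets. -/
theorem stmt6 :
    ∃ S : NumerositySystem ℝ,
      (∀ x y a : ℝ, 0 < a →
        S.num (Set.Ico x (x + a)) = S.num (Set.Ico y (y + a))) ∧
      (∀ (x : ℝ) (a : ℚ), 0 < a →
        S.num (Set.Ico x (x + (a : ℝ))) = S.ι (a : ℝ) * S.num (Set.Ico (0 : ℝ) 1)) ∧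
      (∀ X : Set ℝ, MeasureTheory.NullMeasurableSet X MeasureTheory.volume →
        sh S.ι (S.num X / S.num (Set.Ico (0 : ℝ) 1)) = MeasureTheory.volume X) ∧
      (∀ X : Set ℝ,
        sh S.ι (S.num X / S.num (Set.Ico (0 : ℝ) 1)) ≤ MeasureTheory.volume X) := by
  refine ⟨numerositySystem, fun x y a ha => ?_, fun x a ha => ?_, fun X hX => ?_, fun X => ?_⟩
  · exact (numerosity_Ico_add x ha.le).trans (numerosity_Ico_add y ha.le).symm
  · exact numerosity_Ico_add x (by exact_mod_cast ha.le)
  · rw [numerositySystem, numerosity_div_numerosity_Ico]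
    exact sh_coe_eq_of_tendsto (eventually_mass_nonneg X)
      (tendsto_ofReal_mass_of_nullMeasurableSet hX)
  · obtain ⟨Y, hXY, hY, hYX⟩ := exists_measurable_superset volume X
    rw [numerositySystem, numerosity_div_numerosity_Ico, ← hYX]
    exact sh_coe_le_of_tendsto (eventually_mass_nonneg X) (eventually_mass_le_mass hXY)
      (tendsto_ofReal_mass hY)
end

section
/- Let n : P(ℝ) → F be an elementary numerosity with values in a superreal field F (with embedding ι : ℝ → F) such that n([x, x+a)) = n([y, y+a)) for all x, y ∈ ℝ and all real a > 0. Then n([x, x+a)) = ι(a) · n([0,1)) for every x ∈ ℝ and every positive rational number a. -/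
open scoped ENNReal

/-! Cutting `[x, x + p/q)` and `[0, 1)` into consecutive intervals of length `1/q` gives
`n [x, x + p/q) = p • n [0, 1/q)` and `n [0, 1) = q • n [0, 1/q)`, and `ι (p/q) * q = p`. -/

section IntervalAdditive

variable {M : Type*} [AddCommGroup M] {n : Set ℝ → M}

theorem apply_empty_eq_zero_of_union
    (hadd : ∀ A B : Set ℝ, Disjoint A B → n (A ∪ B) = n A + n B) : n ∅ = 0 := by
  simpa using hadd ∅ ∅ (Set.disjoint_empty _)

theorem apply_Ico_add_nat_mul
    (hadd : ∀ A B : Set ℝ, Disjoint A B → n (A ∪ B) = n A + n B)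
    (hinv : ∀ x y a : ℝ, 0 < a → n (Set.Ico x (x + a)) = n (Set.Ico y (y + a)))
    {ℓ : ℝ} (hℓ : 0 < ℓ) (y : ℝ) (m : ℕ) :
    n (Set.Ico y (y + m * ℓ)) = m • n (Set.Ico 0 ℓ) := by
  induction m with
  | zero => simpa using apply_empty_eq_zero_of_union hadd
  | succ k ih =>
    have hk : y ≤ y + k * ℓ := le_add_of_nonneg_right (by positivity)
    rw [Nat.cast_succ, add_one_mul, ← add_assoc,
      ← Set.Ico_union_Ico_eq_Ico hk (le_add_of_nonneg_right hℓ.le),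
      hadd _ _ Set.Ico_disjoint_Ico_same, ih, hinv _ 0 ℓ hℓ, zero_add, succ_nsmul]

end IntervalAdditive

theorem apply_Ico_add_nat_div {F : Type*} [Ring F] (ι : ℝ →+* F) {n : Set ℝ → F}
    (hadd : ∀ A B : Set ℝ, Disjoint A B → n (A ∪ B) = n A + n B)
    (hinv : ∀ x y a : ℝ, 0 < a → n (Set.Ico x (x + a)) = n (Set.Ico y (y + a)))
    (x : ℝ) (p : ℕ) {q : ℕ} (hq : 0 < q) :
    n (Set.Ico x (x + p / q)) = ι (p / q) * n (Set.Ico 0 1) := by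
  have hℓ : (0 : ℝ) < 1 / q := by positivity
  have hunit : n (Set.Ico 0 1) = q • n (Set.Ico 0 (1 / q)) := by
    simpa [hq.ne'] using apply_Ico_add_nat_mul hadd hinv hℓ 0 q
  have hιq : ι (p / q) * q = p := by
    rw [← map_natCast ι q, ← map_mul, div_mul_cancel₀ _ (by positivity), map_natCast]
  calc n (Set.Ico x (x + p / q))
      = p • n (Set.Ico 0 (1 / q)) := by
        rw [← apply_Ico_add_nat_mul hadd hinv hℓ x p, mul_one_div]
    _ = ι (p / q) * n (Set.Ico 0 1) := by
        rw [hunit, nsmul_eq_mul, nsmul_eq_mul, ← mul_assoc, hιq]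

theorem stmt10_general {F : Type*} [Field F] [LinearOrder F] [IsStrictOrderedRing F] (ι : ℝ →+*o F)
    (n : Set ℝ → F)
    (hadd : ∀ A B : Set ℝ, Disjoint A B → n (A ∪ B) = n A + n B)
    (hinv : ∀ x y a : ℝ, 0 < a → n (Set.Ico x (x + a)) = n (Set.Ico y (y + a))) :
    ∀ (x : ℝ) (a : ℚ), 0 < a →
      n (Set.Ico x (x + (a : ℝ))) = ι (a : ℝ) * n (Set.Ico (0 : ℝ) 1) := by
  intro x a ha
  obtain ⟨p, hp⟩ := Int.eq_ofNat_of_zero_le (Rat.num_nonneg.mpr ha.le)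
  have ha_div : (a : ℝ) = p / a.den := by
    rw [Rat.cast_def, hp, Int.cast_natCast]
  rw [ha_div]
  exact apply_Ico_add_nat_div (ι : ℝ →+* F) hadd hinv x p a.den_pos

/-- If an elementary numerosity on ℝ gives equal values to half-open intervals of equal
length, then n([x, x+a)) = ι(a) · n([0,1)) for every positive rational a. -/
theorem stmt10 {F : Type*} [Field F] [LinearOrder F] [IsStrictOrderedRing F] (ι : ℝ →+*o F)
    (n : Set ℝ → F)
    (hnonneg : ∀ X : Set ℝ, 0 ≤ n X)
    (hsingle : ∀ x : ℝ, n {x} = 1)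
    (hadd : ∀ A B : Set ℝ, Disjoint A B → n (A ∪ B) = n A + n B)
    (hinv : ∀ x y a : ℝ, 0 < a → n (Set.Ico x (x + a)) = n (Set.Ico y (y + a))) :
    ∀ (x : ℝ) (a : ℚ), 0 < a →
      n (Set.Ico x (x + (a : ℝ))) = ι (a : ℝ) * n (Set.Ico (0 : ℝ) 1) :=
  stmt10_general ι n hadd hinv
end
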